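/- arXiv:2506.13088 — 3 statements merged into one kernel-verified Lean document; each statement's English description precedes it below -/
import Mathlib

section
/- Let K ≥ 2 and suppose 0 ≤ ε < C₂(K) := 2/(K − 1). If (V^{[1]}, m^{[1]}) and (V^{[2]}, m^{[2]}) are two solutions of the HJB–Kolmogorov system (with the same data K, T, r, ε, M) such that m^{[1]}_k(t) > 0 and m^{[2]}_k(t) > 0 for every k ∈ {1,…,K} and every t ∈ (0,T], then V^{[1]}_k = V^{[2]}_k on [0,T] for every k ∈ {1,…,K} and m^{[1]}_k = m^{[2]}_k on [0,T] for every k ∈ {0,…,K}; that is, the solution is unique. -/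
noncomputable section

/-- The proportion of active firms: `η(t) = ∑_{k=1}^K m_k(t)`. -/
def marketEta (K : ℕ) (m : ℕ → ℝ → ℝ) (t : ℝ) : ℝ := ∑ k ∈ Finset.Icc 1 K, m k t

/-- The interaction functional
`φ(t) = (∑_{k=1}^K m_k(t)·ΔV_k(t) − η(t)) / (2 + ε·η(t))`, where `ΔV_k = V_k − V_{k−1}`. -/
def marketPhi (K : ℕ) (ε : ℝ) (V m : ℕ → ℝ → ℝ) (t : ℝ) : ℝ :=
  ((∑ k ∈ Finset.Icc 1 K, m k t * (V k t - V (k - 1) t)) - marketEta K m t) /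
    (2 + ε * marketEta K m t)

/-- The equilibrium sale intensity `G_k(t) = ½(1 − ΔV_k(t) + ε·φ(t))`. -/
def marketLam (K : ℕ) (ε : ℝ) (V m : ℕ → ℝ → ℝ) (k : ℕ) (t : ℝ) : ℝ :=
  (1 / 2) * (1 - (V k t - V (k - 1) t) + ε * marketPhi K ε V m t)

/-- `(V, m)` is a solution of the HJB–Kolmogorov system on `[0, T]` with data `K, r, ε, M`:
`V_1, …, V_K` and `m_0, …, m_K` are continuously differentiable on `[0, T]`, `V_0 ≡ 0`,
the HJB equations `V_k' − r V_k + ¼(1 − ΔV_k + ε φ)² = 0` hold for `k = 1, …, K`,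
the Kolmogorov equations hold, `V_k(T) = 0`, and `m_k(0) = M_k`. -/
def IsHJBKolSolution (K : ℕ) (T r ε : ℝ) (M : ℕ → ℝ) (V m : ℕ → ℝ → ℝ) : Prop :=
  (∀ t : ℝ, V 0 t = 0) ∧
  (∀ k, 1 ≤ k → k ≤ K → ContDiffOn ℝ 1 (V k) (Set.Icc 0 T)) ∧
  (∀ k, k ≤ K → ContDiffOn ℝ 1 (m k) (Set.Icc 0 T)) ∧
  (∀ k, 1 ≤ k → k ≤ K → ∀ t ∈ Set.Icc (0 : ℝ) T,
    derivWithin (V k) (Set.Icc 0 T) t - r * V k t +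
      (1 / 4) * (1 - (V k t - V (k - 1) t) + ε * marketPhi K ε V m t) ^ 2 = 0) ∧
  (∀ t ∈ Set.Icc (0 : ℝ) T,
    derivWithin (m 0) (Set.Icc 0 T) t = marketLam K ε V m 1 t * m 1 t) ∧
  (∀ k, 1 ≤ k → k ≤ K - 1 → ∀ t ∈ Set.Icc (0 : ℝ) T,
    derivWithin (m k) (Set.Icc 0 T) t =
      marketLam K ε V m (k + 1) t * m (k + 1) t - marketLam K ε V m k t * m k t) ∧
  (∀ t ∈ Set.Icc (0 : ℝ) T,
    derivWithin (m K) (Set.Icc 0 T) t = -(marketLam K ε V m K t) * m K t) ∧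
  (∀ k, 1 ≤ k → k ≤ K → V k T = 0) ∧
  (∀ k, k ≤ K → m k 0 = M k)

/-!
Lasry–Lions monotonicity. For two solutions, the pairing `X = ∑ₖ (m¹ₖ − m²ₖ)(V¹ₖ − V²ₖ)` satisfies
`X' = r X + Q` with `Q = ∑ₖ (m¹ₖ + m²ₖ)(G¹ₖ − G²ₖ)² + ε (φ¹ − φ²)² ≥ 0`, and `X` vanishes at `t = 0`
(same initial densities) and at `t = T` (terminal condition). So `e^{−rt} X` is monotone with zero
endpoints, hence `Q ≡ 0`, and positivity of the densities forces `G¹ₖ = G²ₖ`. With equal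
intensities, `V¹ₖ − V²ₖ` solves `w' = r w` with `w(T) = 0`, and `m¹ − m²` solves a bidiagonal linear
system with zero initial data, which Grönwall's inequality kills from `k = K` downwards.
-/

open Set Real

section ScalarODE

variable {f L q : ℝ → ℝ} {f' a b c t : ℝ} {s : Set ℝ}

theorem hasDerivWithinAt_exp_neg_mul_mul (hf : HasDerivWithinAt f f' s t) :
    HasDerivWithinAt (fun u => exp (-c * u) * f u) (exp (-c * t) * (f' - c * f t)) s t := by
  have he : HasDerivAt (fun u => exp (-c * u)) (exp (-c * t) * (-c * 1)) t :=
    ((hasDerivAt_id t).const_mul (-c)).exp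
  exact (he.hasDerivWithinAt.fun_mul hf).congr_deriv (by ring)

theorem eq_zero_of_hasDerivWithinAt_const_mul_of_eq_zero_right
    (hf : ∀ t ∈ Icc a b, HasDerivWithinAt f (c * f t) (Icc a b) t) (hb : f b = 0) :
    ∀ t ∈ Icc a b, f t = 0 := by
  intro t ht
  have hg : ∀ t ∈ Icc a b, HasDerivWithinAt (fun u => exp (-c * u) * f u) 0 (Icc a b) t :=
    fun t ht => by simpa using hasDerivWithinAt_exp_neg_mul_mul (c := c) (hf t ht)
  have hconst := constant_of_has_deriv_right_zero
    (fun t ht => (hg t ht).continuousWithinAt)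
    (fun t ht => (hg t (Ico_subset_Icc_self ht)).mono_of_mem_nhdsWithin
      (Icc_mem_nhdsGE_of_mem ht))
  have hgt : exp (-c * t) * f t = exp (-c * b) * f b :=
    (hconst t ht).trans (hconst b ⟨ht.1.trans ht.2, le_rfl⟩).symm
  rw [hb, mul_zero] at hgt
  exact (mul_eq_zero.1 hgt).resolve_left (exp_ne_zero _)

theorem eq_zero_of_nonneg_of_hasDerivWithinAt_mul_add (hab : a < b)
    (hf : ∀ t ∈ Icc a b, HasDerivWithinAt f (c * f t + q t) (Icc a b) t)
    (hq : ∀ t ∈ Icc a b, 0 ≤ q t) (ha : f a = 0) (hb : f b = 0) :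
    ∀ t ∈ Icc a b, q t = 0 := by
  have hg : ∀ t ∈ Icc a b,
      HasDerivWithinAt (fun u => exp (-c * u) * f u) (exp (-c * t) * q t) (Icc a b) t :=
    fun t ht => by simpa using hasDerivWithinAt_exp_neg_mul_mul (c := c) (hf t ht)
  have hmono : MonotoneOn (fun u => exp (-c * u) * f u) (Icc a b) := by
    refine monotoneOn_of_hasDerivWithinAt_nonneg (convex_Icc a b)
      (f' := fun t => exp (-c * t) * q t)
      (fun t ht => (hg t ht).continuousWithinAt) (fun t ht => ?_) (fun t ht => ?_)
    · exact (hg t (interior_subset ht)).mono interior_subset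
    · exact mul_nonneg (exp_pos _).le (hq t (interior_subset ht))
  have hzero : ∀ t ∈ Icc a b, f t = 0 := by
    intro t ht
    have h₁ := hmono ⟨le_rfl, hab.le⟩ ht ht.1
    have h₂ := hmono ht ⟨hab.le, le_rfl⟩ ht.2
    simp only [ha, hb, mul_zero] at h₁ h₂
    exact (mul_eq_zero.1 (le_antisymm h₂ h₁)).resolve_left (exp_ne_zero _)
  intro t ht
  have h0 : HasDerivWithinAt f 0 (Icc a b) t :=
    (hasDerivWithinAt_const t _ 0).congr_of_mem hzero ht
  have := (uniqueDiffOn_Icc hab t ht).eq_deriv _ (hf t ht) h0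
  rwa [hzero t ht, mul_zero, zero_add] at this

theorem eq_zero_of_hasDerivWithinAt_mul_of_eq_zero_left (hL : ContinuousOn L (Icc a b))
    (hf : ∀ t ∈ Icc a b, HasDerivWithinAt f (L t * f t) (Icc a b) t) (ha : f a = 0) :
    ∀ t ∈ Icc a b, f t = 0 := by
  obtain ⟨C, hC⟩ := isCompact_Icc.exists_bound_of_continuousOn hL
  refine eq_zero_of_abs_deriv_le_mul_abs_self_of_eq_zero_right (K := C)
    (fun t ht => (hf t ht).continuousWithinAt)
    (fun t ht => (hf t (Ico_subset_Icc_self ht)).mono_of_mem_nhdsWithin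
      (Icc_mem_nhdsGE_of_mem ht)) ha (fun t ht => ?_)
  rw [norm_mul]
  exact mul_le_mul_of_nonneg_right (hC t (Ico_subset_Icc_self ht)) (norm_nonneg _)

theorem eq_zero_of_hasDerivWithinAt_bidiagonal {K : ℕ} {L d : ℕ → ℝ → ℝ}
    (hL : ∀ k ≤ K, ContinuousOn (L k) (Icc a b)) (hLK : ∀ t ∈ Icc a b, L (K + 1) t = 0)
    (hd : ∀ k ≤ K, ∀ t ∈ Icc a b,
      HasDerivWithinAt (d k) (L (k + 1) t * d (k + 1) t - L k t * d k t) (Icc a b) t)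
    (ha : ∀ k ≤ K, d k a = 0) :
    ∀ k ≤ K, ∀ t ∈ Icc a b, d k t = 0 := by
  have step : ∀ k ≤ K, (∀ t ∈ Icc a b, L (k + 1) t * d (k + 1) t = 0) →
      ∀ t ∈ Icc a b, d k t = 0 := fun k hk hnext =>
    eq_zero_of_hasDerivWithinAt_mul_of_eq_zero_left (hL k hk).neg
      (fun t ht => by simpa [hnext t ht] using hd k hk t ht) (ha k hk)
  suffices h : ∀ j k, k ≤ K → K - k = j → ∀ t ∈ Icc a b, d k t = 0 from
    fun k hk => h _ k hk rfl
  intro j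
  induction j with
  | zero =>
    intro k hk hj
    obtain rfl : k = K := by omega
    exact step k hk fun t ht => by rw [hLK t ht, zero_mul]
  | succ j ih =>
    intro k hk hj
    exact step k hk fun t ht => by rw [ih (k + 1) (by omega) (by omega) t ht, mul_zero]

end ScalarODE

/-- `G_k` extended by zero outside `1 ≤ k ≤ K`, so that every Kolmogorov equation reads
`m_k' = G_{k+1} m_{k+1} − G_k m_k`. -/
def marketRate (K : ℕ) (ε : ℝ) (V m : ℕ → ℝ → ℝ) (k : ℕ) (t : ℝ) : ℝ :=
  if 1 ≤ k ∧ k ≤ K then marketLam K ε V m k t else 0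

def lasryLionsPairing (K : ℕ) (V₁ m₁ V₂ m₂ : ℕ → ℝ → ℝ) (t : ℝ) : ℝ :=
  ∑ k ∈ Finset.Icc 1 K, (m₁ k t - m₂ k t) * (V₁ k t - V₂ k t)

def lasryLionsDissipation (K : ℕ) (ε : ℝ) (V₁ m₁ V₂ m₂ : ℕ → ℝ → ℝ) (t : ℝ) : ℝ :=
  ∑ k ∈ Finset.Icc 1 K,
      (m₁ k t + m₂ k t) * (marketLam K ε V₁ m₁ k t - marketLam K ε V₂ m₂ k t) ^ 2 +
    ε * (marketPhi K ε V₁ m₁ t - marketPhi K ε V₂ m₂ t) ^ 2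

section Algebra

variable {K k : ℕ} {ε t : ℝ} {V m V₁ m₁ V₂ m₂ : ℕ → ℝ → ℝ}

theorem marketRate_of_mem (hk1 : 1 ≤ k) (hk2 : k ≤ K) :
    marketRate K ε V m k t = marketLam K ε V m k t :=
  if_pos ⟨hk1, hk2⟩

theorem marketRate_succ_self : marketRate K ε V m (K + 1) t = 0 :=
  if_neg (by omega)

theorem two_add_mul_marketEta_pos (hε : 0 ≤ ε) (hm : ∀ k, 1 ≤ k → k ≤ K → 0 ≤ m k t) :
    0 < 2 + ε * marketEta K m t := by
  have : 0 ≤ marketEta K m t := Finset.sum_nonneg fun k hk =>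
    hm k (Finset.mem_Icc.1 hk).1 (Finset.mem_Icc.1 hk).2
  positivity

theorem sum_marketLam_mul (hden : 2 + ε * marketEta K m t ≠ 0) :
    ∑ k ∈ Finset.Icc 1 K, marketLam K ε V m k t * m k t = -marketPhi K ε V m t := by
  have hφ : marketPhi K ε V m t * (2 + ε * marketEta K m t) =
      ∑ k ∈ Finset.Icc 1 K, m k t * (V k t - V (k - 1) t) - marketEta K m t := by
    rw [marketPhi, div_mul_cancel₀ _ hden]
  have hterm : ∀ k ∈ Finset.Icc 1 K, marketLam K ε V m k t * m k t =
      (1 + ε * marketPhi K ε V m t) / 2 * m k t - m k t * (V k t - V (k - 1) t) / 2 :=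
    fun k _ => by rw [marketLam]; ring
  rw [Finset.sum_congr rfl hterm, Finset.sum_sub_distrib, ← Finset.mul_sum, ← Finset.sum_div]
  change _ * marketEta K m t - _ = _
  linear_combination (1 / 2 : ℝ) * hφ

theorem lasryLionsDissipation_nonneg (hε : 0 ≤ ε) (hm₁ : ∀ k, 1 ≤ k → k ≤ K → 0 ≤ m₁ k t)
    (hm₂ : ∀ k, 1 ≤ k → k ≤ K → 0 ≤ m₂ k t) :
    0 ≤ lasryLionsDissipation K ε V₁ m₁ V₂ m₂ t := by
  refine add_nonneg (Finset.sum_nonneg fun k hk => ?_) (by positivity)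
  have := hm₁ k (Finset.mem_Icc.1 hk).1 (Finset.mem_Icc.1 hk).2
  have := hm₂ k (Finset.mem_Icc.1 hk).1 (Finset.mem_Icc.1 hk).2
  positivity

end Algebra

namespace IsHJBKolSolution

variable {K k : ℕ} {T r ε t : ℝ} {M : ℕ → ℝ} {V m : ℕ → ℝ → ℝ}

theorem V_terminal (h : IsHJBKolSolution K T r ε M V m) (hk1 : 1 ≤ k) (hk2 : k ≤ K) :
    V k T = 0 :=
  h.2.2.2.2.2.2.2.1 k hk1 hk2

theorem m_initial (h : IsHJBKolSolution K T r ε M V m) (hk : k ≤ K) : m k 0 = M k :=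
  h.2.2.2.2.2.2.2.2 k hk

theorem m_nonneg (h : IsHJBKolSolution K T r ε M V m) (hM : ∀ k, k ≤ K → 0 ≤ M k)
    (hm : ∀ k, 1 ≤ k → k ≤ K → ∀ t ∈ Ioc 0 T, 0 < m k t) :
    ∀ k, 1 ≤ k → k ≤ K → ∀ t ∈ Icc 0 T, 0 ≤ m k t := by
  intro k hk1 hk2 t ht
  rcases ht.1.eq_or_lt with rfl | h0
  · exact h.m_initial hk2 ▸ hM k hk2
  · exact (hm k hk1 hk2 t ⟨h0, ht.2⟩).le

theorem continuousOn_V (h : IsHJBKolSolution K T r ε M V m) (hk : k ≤ K) :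
    ContinuousOn (V k) (Icc 0 T) := by
  rcases Nat.eq_zero_or_pos k with rfl | hk0
  · exact continuousOn_const.congr fun t _ => h.1 t
  · exact (h.2.1 k hk0 hk).continuousOn

theorem continuousOn_marketLam (h : IsHJBKolSolution K T r ε M V m)
    (hden : ∀ t ∈ Icc 0 T, 2 + ε * marketEta K m t ≠ 0) (hk : k ≤ K) :
    ContinuousOn (marketLam K ε V m k) (Icc 0 T) := by
  have hm : ∀ j ∈ Finset.Icc 1 K, ContinuousOn (m j) (Icc 0 T) :=
    fun j hj => (h.2.2.1 j (Finset.mem_Icc.1 hj).2).continuousOn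
  have hV : ∀ j, j ≤ K → ContinuousOn (fun t => V j t - V (j - 1) t) (Icc 0 T) :=
    fun j hj => (h.continuousOn_V hj).sub (h.continuousOn_V (by omega))
  have hη : ContinuousOn (marketEta K m) (Icc 0 T) := continuousOn_finsetSum _ hm
  have hφ : ContinuousOn (marketPhi K ε V m) (Icc 0 T) :=
    ((continuousOn_finsetSum _ fun j hj =>
      (hm j hj).mul (hV j (Finset.mem_Icc.1 hj).2)).sub hη).div
      (continuousOn_const.add (continuousOn_const.mul hη)) hden
  exact continuousOn_const.mul ((continuousOn_const.sub (hV k hk)).add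
    (continuousOn_const.mul hφ))

theorem continuousOn_marketRate (h : IsHJBKolSolution K T r ε M V m)
    (hden : ∀ t ∈ Icc 0 T, 2 + ε * marketEta K m t ≠ 0) :
    ContinuousOn (marketRate K ε V m k) (Icc 0 T) := by
  by_cases hk : 1 ≤ k ∧ k ≤ K
  · exact (h.continuousOn_marketLam hden hk.2).congr fun t _ => marketRate_of_mem hk.1 hk.2
  · exact continuousOn_const.congr fun t _ => if_neg hk

theorem hasDerivWithinAt_V (h : IsHJBKolSolution K T r ε M V m) (hk1 : 1 ≤ k) (hk2 : k ≤ K)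
    (ht : t ∈ Icc 0 T) :
    HasDerivWithinAt (V k) (r * V k t - marketLam K ε V m k t ^ 2) (Icc 0 T) t := by
  refine ((h.2.1 k hk1 hk2).differentiableOn one_ne_zero t ht).hasDerivWithinAt.congr_deriv ?_
  rw [marketLam]
  linear_combination h.2.2.2.1 k hk1 hk2 t ht

theorem hasDerivWithinAt_m (h : IsHJBKolSolution K T r ε M V m) (hK : 1 ≤ K) (hk : k ≤ K)
    (ht : t ∈ Icc 0 T) :
    HasDerivWithinAt (m k)
      (marketRate K ε V m (k + 1) t * m (k + 1) t - marketRate K ε V m k t * m k t)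
      (Icc 0 T) t := by
  obtain ⟨-, -, hmd, -, h0, hmid, htop, -, -⟩ := h
  refine ((hmd k hk).differentiableOn one_ne_zero t ht).hasDerivWithinAt.congr_deriv ?_
  rcases Nat.eq_zero_or_pos k with rfl | hk0
  · rw [h0 t ht, marketRate_of_mem le_rfl hK]
    simp [marketRate]
  rcases hk.eq_or_lt with rfl | hkK
  · rw [htop t ht, marketRate_succ_self, marketRate_of_mem hk0 le_rfl]
    ring
  · rw [hmid k hk0 (by omega) t ht, marketRate_of_mem (by omega) hkK,
      marketRate_of_mem hk0 hk]

end IsHJBKolSolution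

section TwoSolutions

variable {K : ℕ} {T r ε : ℝ} {M M₁ M₂ : ℕ → ℝ} {V₁ m₁ V₂ m₂ : ℕ → ℝ → ℝ}

theorem hasDerivWithinAt_lasryLionsPairing (h₁ : IsHJBKolSolution K T r ε M₁ V₁ m₁)
    (h₂ : IsHJBKolSolution K T r ε M₂ V₂ m₂) (hK : 1 ≤ K) {t : ℝ} (ht : t ∈ Icc 0 T)
    (hden₁ : 2 + ε * marketEta K m₁ t ≠ 0) (hden₂ : 2 + ε * marketEta K m₂ t ≠ 0) :
    HasDerivWithinAt (lasryLionsPairing K V₁ m₁ V₂ m₂)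
      (r * lasryLionsPairing K V₁ m₁ V₂ m₂ t + lasryLionsDissipation K ε V₁ m₁ V₂ m₂ t)
      (Icc 0 T) t := by
  have hderiv := HasDerivWithinAt.fun_sum (u := Finset.Icc 1 K) fun k hk =>
    (((h₁.hasDerivWithinAt_m hK (Finset.mem_Icc.1 hk).2 ht).sub
      (h₂.hasDerivWithinAt_m hK (Finset.mem_Icc.1 hk).2 ht)).mul
    ((h₁.hasDerivWithinAt_V (Finset.mem_Icc.1 hk).1 (Finset.mem_Icc.1 hk).2 ht).sub
      (h₂.hasDerivWithinAt_V (Finset.mem_Icc.1 hk).1 (Finset.mem_Icc.1 hk).2 ht)))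
  refine hderiv.congr_deriv ?_
  simp only [Pi.sub_apply]
  obtain ⟨F, hF⟩ : ∃ F : ℕ → ℝ, ∀ k, F k =
      (marketRate K ε V₁ m₁ k t * m₁ k t - marketRate K ε V₂ m₂ k t * m₂ k t) *
        (V₁ (k - 1) t - V₂ (k - 1) t) := ⟨_, fun _ => rfl⟩
  -- summation by parts moves the transport terms onto `ΔV`, where the HJB equations apply
  have hterm : ∀ k ∈ Finset.Icc 1 K,
      (marketRate K ε V₁ m₁ (k + 1) t * m₁ (k + 1) t - marketRate K ε V₁ m₁ k t * m₁ k t -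
          (marketRate K ε V₂ m₂ (k + 1) t * m₂ (k + 1) t - marketRate K ε V₂ m₂ k t * m₂ k t)) *
          (V₁ k t - V₂ k t) +
        (m₁ k t - m₂ k t) * (r * V₁ k t - marketLam K ε V₁ m₁ k t ^ 2 -
          (r * V₂ k t - marketLam K ε V₂ m₂ k t ^ 2)) =
      (F (k + 1) - F k) + r * ((m₁ k t - m₂ k t) * (V₁ k t - V₂ k t)) +
        (m₁ k t + m₂ k t) * (marketLam K ε V₁ m₁ k t - marketLam K ε V₂ m₂ k t) ^ 2 -
        ε * (marketPhi K ε V₁ m₁ t - marketPhi K ε V₂ m₂ t) *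
          (marketLam K ε V₁ m₁ k t * m₁ k t - marketLam K ε V₂ m₂ k t * m₂ k t) := by
    intro k hk
    obtain ⟨hk1, hk2⟩ := Finset.mem_Icc.1 hk
    rw [hF, hF, Nat.add_sub_cancel, marketRate_of_mem hk1 hk2, marketRate_of_mem hk1 hk2]
    simp only [marketLam]
    ring
  have htel : ∑ k ∈ Finset.Icc 1 K, (F (k + 1) - F k) = 0 := by
    rw [Finset.sum_Icc_sub hK, hF, hF]
    simp [marketRate_succ_self, h₁.1, h₂.1]
  rw [Finset.sum_congr rfl hterm]
  simp only [Finset.sum_sub_distrib, Finset.sum_add_distrib, ← Finset.mul_sum] at htel ⊢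
  rw [sum_marketLam_mul hden₁, sum_marketLam_mul hden₂, lasryLionsPairing,
    lasryLionsDissipation]
  linear_combination htel

theorem marketLam_eq_of_m_pos (h₁ : IsHJBKolSolution K T r ε M V₁ m₁)
    (h₂ : IsHJBKolSolution K T r ε M V₂ m₂) (hK : 1 ≤ K) (hT : 0 < T) (hε : 0 ≤ ε)
    (hm₁ : ∀ k, 1 ≤ k → k ≤ K → ∀ t ∈ Icc 0 T, 0 ≤ m₁ k t)
    (hm₂ : ∀ k, 1 ≤ k → k ≤ K → ∀ t ∈ Icc 0 T, 0 ≤ m₂ k t)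
    (hm₁pos : ∀ k, 1 ≤ k → k ≤ K → ∀ t ∈ Ioc 0 T, 0 < m₁ k t)
    (hm₂pos : ∀ k, 1 ≤ k → k ≤ K → ∀ t ∈ Ioc 0 T, 0 < m₂ k t)
    (hden₁ : ∀ t ∈ Icc 0 T, 2 + ε * marketEta K m₁ t ≠ 0)
    (hden₂ : ∀ t ∈ Icc 0 T, 2 + ε * marketEta K m₂ t ≠ 0) :
    ∀ k, 1 ≤ k → k ≤ K → ∀ t ∈ Icc 0 T, marketLam K ε V₁ m₁ k t = marketLam K ε V₂ m₂ k t := by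
  have hQ := eq_zero_of_nonneg_of_hasDerivWithinAt_mul_add hT
    (fun t ht => hasDerivWithinAt_lasryLionsPairing h₁ h₂ hK ht (hden₁ t ht) (hden₂ t ht))
    (fun t ht => lasryLionsDissipation_nonneg hε (fun k hk1 hk2 => hm₁ k hk1 hk2 t ht)
      (fun k hk1 hk2 => hm₂ k hk1 hk2 t ht))
    (Finset.sum_eq_zero fun k hk => by
      rw [h₁.m_initial (Finset.mem_Icc.1 hk).2, h₂.m_initial (Finset.mem_Icc.1 hk).2, sub_self,
        zero_mul])
    (Finset.sum_eq_zero fun k hk => by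
      rw [h₁.V_terminal (Finset.mem_Icc.1 hk).1 (Finset.mem_Icc.1 hk).2,
        h₂.V_terminal (Finset.mem_Icc.1 hk).1 (Finset.mem_Icc.1 hk).2, sub_self, mul_zero])
  intro k hk1 hk2
  refine EqOn.of_subset_closure (fun t ht => ?_) (h₁.continuousOn_marketLam hden₁ hk2)
    (h₂.continuousOn_marketLam hden₂ hk2) Ioc_subset_Icc_self (closure_Ioc hT.ne).ge
  have hterm_nonneg : ∀ j ∈ Finset.Icc 1 K,
      0 ≤ (m₁ j t + m₂ j t) * (marketLam K ε V₁ m₁ j t - marketLam K ε V₂ m₂ j t) ^ 2 :=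
    fun j hj => mul_nonneg
      (add_nonneg (hm₁ j (Finset.mem_Icc.1 hj).1 (Finset.mem_Icc.1 hj).2 t (Ioc_subset_Icc_self ht))
        (hm₂ j (Finset.mem_Icc.1 hj).1 (Finset.mem_Icc.1 hj).2 t (Ioc_subset_Icc_self ht)))
      (sq_nonneg _)
  have hsum := ((add_eq_zero_iff_of_nonneg (Finset.sum_nonneg hterm_nonneg) (by positivity)).1
    (hQ t (Ioc_subset_Icc_self ht))).1
  have hterm := (Finset.sum_eq_zero_iff_of_nonneg hterm_nonneg).1 hsum k
    (Finset.mem_Icc.2 ⟨hk1, hk2⟩)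
  have hpos : 0 < m₁ k t + m₂ k t := add_pos (hm₁pos k hk1 hk2 t ht) (hm₂pos k hk1 hk2 t ht)
  exact sub_eq_zero.1 <| pow_eq_zero_iff two_ne_zero |>.1 <|
    (mul_eq_zero.1 hterm).resolve_left hpos.ne'

theorem V_eq_of_marketLam_eq (h₁ : IsHJBKolSolution K T r ε M₁ V₁ m₁)
    (h₂ : IsHJBKolSolution K T r ε M₂ V₂ m₂)
    (hG : ∀ k, 1 ≤ k → k ≤ K → ∀ t ∈ Icc 0 T, marketLam K ε V₁ m₁ k t = marketLam K ε V₂ m₂ k t) :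
    ∀ k, 1 ≤ k → k ≤ K → ∀ t ∈ Icc 0 T, V₁ k t = V₂ k t := by
  intro k hk1 hk2 t ht
  refine sub_eq_zero.1 (eq_zero_of_hasDerivWithinAt_const_mul_of_eq_zero_right (c := r)
    (f := fun u => V₁ k u - V₂ k u) (fun s hs => ?_) ?_ t ht)
  · exact ((h₁.hasDerivWithinAt_V hk1 hk2 hs).sub (h₂.hasDerivWithinAt_V hk1 hk2 hs)).congr_deriv
      (by rw [hG k hk1 hk2 s hs]; ring)
  · rw [h₁.V_terminal hk1 hk2, h₂.V_terminal hk1 hk2, sub_self]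

theorem m_eq_of_marketLam_eq (h₁ : IsHJBKolSolution K T r ε M V₁ m₁)
    (h₂ : IsHJBKolSolution K T r ε M V₂ m₂) (hK : 1 ≤ K)
    (hden₁ : ∀ t ∈ Icc 0 T, 2 + ε * marketEta K m₁ t ≠ 0)
    (hG : ∀ k, 1 ≤ k → k ≤ K → ∀ t ∈ Icc 0 T, marketLam K ε V₁ m₁ k t = marketLam K ε V₂ m₂ k t) :
    ∀ k ≤ K, ∀ t ∈ Icc 0 T, m₁ k t = m₂ k t := by
  have hrate : ∀ k, ∀ t ∈ Icc 0 T, marketRate K ε V₂ m₂ k t = marketRate K ε V₁ m₁ k t := by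
    intro k t ht
    unfold marketRate
    split_ifs with hk
    exacts [(hG k hk.1 hk.2 t ht).symm, rfl]
  intro k hk t ht
  refine sub_eq_zero.1 (eq_zero_of_hasDerivWithinAt_bidiagonal (L := marketRate K ε V₁ m₁)
    (d := fun k u => m₁ k u - m₂ k u) (fun k _ => h₁.continuousOn_marketRate hden₁)
    (fun _ _ => marketRate_succ_self) (fun k hk s hs => ?_) (fun k hk => ?_) k hk t ht)
  · exact ((h₁.hasDerivWithinAt_m hK hk hs).sub (h₂.hasDerivWithinAt_m hK hk hs)).congr_deriv
      (by rw [hrate _ s hs, hrate _ s hs]; ring)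
  · rw [h₁.m_initial hk, h₂.m_initial hk, sub_self]

end TwoSolutions

theorem solution_unique_of_small_interaction_general
    (K : ℕ) (hK : 2 ≤ K) (T r ε : ℝ) (hT : 0 < T)
    (M : ℕ → ℝ) (hM : ∀ k, k ≤ K → 0 ≤ M k)
    (hε0 : 0 ≤ ε)
    (V₁ m₁ V₂ m₂ : ℕ → ℝ → ℝ)
    (h1 : IsHJBKolSolution K T r ε M V₁ m₁)
    (h2 : IsHJBKolSolution K T r ε M V₂ m₂)
    (hm1pos : ∀ k, 1 ≤ k → k ≤ K → ∀ t ∈ Set.Ioc (0 : ℝ) T, 0 < m₁ k t)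
    (hm2pos : ∀ k, 1 ≤ k → k ≤ K → ∀ t ∈ Set.Ioc (0 : ℝ) T, 0 < m₂ k t) :
    (∀ k, 1 ≤ k → k ≤ K → ∀ t ∈ Set.Icc (0 : ℝ) T, V₁ k t = V₂ k t) ∧
    (∀ k, k ≤ K → ∀ t ∈ Set.Icc (0 : ℝ) T, m₁ k t = m₂ k t) := by
  have hK1 : 1 ≤ K := by omega
  have hm₁ := h1.m_nonneg hM hm1pos
  have hm₂ := h2.m_nonneg hM hm2pos
  have hden₁ : ∀ t ∈ Icc 0 T, 2 + ε * marketEta K m₁ t ≠ 0 := fun t ht =>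
    (two_add_mul_marketEta_pos hε0 fun k hk1 hk2 => hm₁ k hk1 hk2 t ht).ne'
  have hden₂ : ∀ t ∈ Icc 0 T, 2 + ε * marketEta K m₂ t ≠ 0 := fun t ht =>
    (two_add_mul_marketEta_pos hε0 fun k hk1 hk2 => hm₂ k hk1 hk2 t ht).ne'
  have hG := marketLam_eq_of_m_pos h1 h2 hK1 hT hε0 hm₁ hm₂ hm1pos hm2pos hden₁ hden₂
  exact ⟨V_eq_of_marketLam_eq h1 h2 hG, m_eq_of_marketLam_eq h1 h2 hK1 hden₁ hG⟩

/-- **Uniqueness.** If `K ≥ 2` and `0 ≤ ε < C₂(K) = 2/(K−1)`, then any two solutions of the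
HJB–Kolmogorov system (with the same data) whose inventory densities `m_k`, `k = 1, …, K`, are
strictly positive on `(0, T]` coincide on `[0, T]`. -/
theorem solution_unique_of_small_interaction
    (K : ℕ) (hK : 2 ≤ K) (T r ε : ℝ) (hT : 0 < T) (hr : 0 < r)
    (M : ℕ → ℝ) (hM : ∀ k, k ≤ K → 0 ≤ M k)
    (hMsum : ∑ k ∈ Finset.Icc 0 K, M k = 1)
    (hε0 : 0 ≤ ε) (hε1 : ε < 2 / ((K : ℝ) - 1))
    (V₁ m₁ V₂ m₂ : ℕ → ℝ → ℝ)
    (h1 : IsHJBKolSolution K T r ε M V₁ m₁)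
    (h2 : IsHJBKolSolution K T r ε M V₂ m₂)
    (hm1pos : ∀ k, 1 ≤ k → k ≤ K → ∀ t ∈ Set.Ioc (0 : ℝ) T, 0 < m₁ k t)
    (hm2pos : ∀ k, 1 ≤ k → k ≤ K → ∀ t ∈ Set.Ioc (0 : ℝ) T, 0 < m₂ k t) :
    (∀ k, 1 ≤ k → k ≤ K → ∀ t ∈ Set.Icc (0 : ℝ) T, V₁ k t = V₂ k t) ∧
    (∀ k, k ≤ K → ∀ t ∈ Set.Icc (0 : ℝ) T, m₁ k t = m₂ k t) :=
  solution_unique_of_small_interaction_general K hK T r ε hT M hM hε0 V₁ m₁ V₂ m₂ h1 h2 hm1pos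
    hm2pos
end
end

section
/- For ε = 0, the HJB–Kolmogorov system has exactly one solution (V^{(0)}, m^{(0)}) on [0,T]: there exist continuously differentiable functions V^{(0)}_1,…,V^{(0)}_K, m^{(0)}_0,…,m^{(0)}_K : [0,T] → ℝ solving the system, and any two such solutions coincide. -/
noncomputable section

/-!
For `ε = 0` the HJB equations form a triangular system: `V_k` solves a scalar equation driven by
`V_{k-1}`, integrated backward from `V_k(T) = 0`. Truncating `ΔV_k` to `[0, 1]` makes the
nonlinearity bounded and Lipschitz, so after factoring out `e^{rt}` Picard–Lindelöf gives a solution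
on all of `[0, T]`; a first-exit argument (using `r ≥ 0`) shows that `ΔV_k` never leaves `[0, 1]`,
so the truncation is inactive. Given `V`, the Kolmogorov equations are linear and triangular in the
other direction and are solved from `m_K` down to `m_0`. For uniqueness, the difference of two
solutions at each level solves a linear homogeneous equation with zero data, hence vanishes.
-/

open Set Function
open scoped NNReal

theorem exists_seq_of_forall_exists {α : Type*} {P : α → Prop} {R : α → α → Prop} {x₀ : α}
    (h₀ : P x₀) (h : ∀ x, P x → ∃ y, P y ∧ R x y) :
    ∃ f : ℕ → α, f 0 = x₀ ∧ ∀ n, P (f n) ∧ R (f n) (f (n + 1)) := by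
  choose g hgP hgR using h
  let f : ℕ → {x // P x} := fun n => Nat.rec ⟨x₀, h₀⟩ (fun _ x => ⟨g x.1 x.2, hgP x.1 x.2⟩) n
  exact ⟨fun n => (f n).1, rfl, fun n => ⟨(f n).2, hgR _ _⟩⟩

section ODE

variable {E : Type*} [NormedAddCommGroup E] [NormedSpace ℝ E] {a b t₀ : ℝ}

theorem exists_hasDerivWithinAt_of_lipschitzWith_of_norm_le [CompleteSpace E]
    {f : ℝ → E → E} {K : ℝ≥0} {L : ℝ} (ht₀ : t₀ ∈ Icc a b) (x₀ : E)
    (hlip : ∀ t ∈ Icc a b, LipschitzWith K (f t))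
    (hcont : ∀ x, ContinuousOn (f · x) (Icc a b))
    (hbdd : ∀ t ∈ Icc a b, ∀ x, ‖f t x‖ ≤ L) :
    ∃ α : ℝ → E, α t₀ = x₀ ∧
      ∀ t ∈ Icc a b, HasDerivWithinAt α (f t (α t)) (Icc a b) t := by
  have hba : 0 ≤ b - a := by linarith [ht₀.1, ht₀.2]
  have hpl : IsPicardLindelof f ⟨t₀, ht₀⟩ x₀ (L.toNNReal * (b - a).toNNReal) 0 L.toNNReal K :=
    { lipschitzOnWith := fun t ht => (hlip t ht).lipschitzOnWith
      continuousOn := fun x _ => hcont x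
      norm_le := fun t ht x _ => (hbdd t ht x).trans (Real.le_coe_toNNReal L)
      mul_max_le := by
        simp only [NNReal.coe_mul, Real.coe_toNNReal _ hba, NNReal.coe_zero, sub_zero]
        gcongr
        exact max_le (by linarith [ht₀.1]) (by linarith [ht₀.2]) }
  exact hpl.exists_eq_forall_mem_Icc_hasDerivWithinAt₀

theorem ContinuousOn.hasDerivWithinAt_integral_Icc [CompleteSpace E] {c : ℝ → E}
    (hc : ContinuousOn c (Icc a b)) (ht₀ : t₀ ∈ Icc a b) {t : ℝ} (ht : t ∈ Icc a b) :
    HasDerivWithinAt (fun u => ∫ s in t₀..u, c s) (c t) (Icc a b) t := by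
  have : Fact (t ∈ Icc a b) := ⟨ht⟩
  exact intervalIntegral.integral_hasDerivWithinAt_right
    ((hc.mono (uIcc_subset_Icc ht₀ ht)).intervalIntegrable)
    (hc.stronglyMeasurableAtFilter_nhdsWithin measurableSet_Icc t) (hc t ht)

theorem LipschitzWith.inv_smul_comp_smul {h : E → E} {K : ℝ≥0} (hh : LipschitzWith K h) {s : ℝ}
    (hs : s ≠ 0) : LipschitzWith K fun x => s⁻¹ • h (s • x) :=
  LipschitzWith.of_dist_le_mul fun x y => by
    calc dist (s⁻¹ • h (s • x)) (s⁻¹ • h (s • y)) = ‖s⁻¹‖ * dist (h (s • x)) (h (s • y)) :=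
          dist_smul₀ _ _ _
      _ ≤ ‖s⁻¹‖ * (K * dist (s • x) (s • y)) := by gcongr; exact hh.dist_le_mul _ _
      _ = K * dist x y := by
          rw [dist_smul₀, norm_inv]
          field_simp [norm_ne_zero_iff.2 hs]

theorem exists_hasDerivWithinAt_smul_add [CompleteSpace E] {c : ℝ → ℝ} {h : ℝ → E → E}
    {K : ℝ≥0} {H : ℝ} (ht₀ : t₀ ∈ Icc a b) (x₀ : E) (hc : ContinuousOn c (Icc a b))
    (hlip : ∀ t ∈ Icc a b, LipschitzWith K (h t))
    (hcont : ∀ x, ContinuousOn (h · x) (Icc a b))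
    (hbdd : ∀ t ∈ Icc a b, ∀ x, ‖h t x‖ ≤ H) :
    ∃ x : ℝ → E, x t₀ = x₀ ∧
      ∀ t ∈ Icc a b, HasDerivWithinAt x (c t • x t + h t (x t)) (Icc a b) t := by
  set C : ℝ → ℝ := fun u => ∫ s in t₀..u, c s
  have hC : ∀ t ∈ Icc a b, HasDerivWithinAt C (c t) (Icc a b) t :=
    fun t ht => hc.hasDerivWithinAt_integral_Icc ht₀ ht
  have hE : ContinuousOn (fun t => Real.exp (C t)) (Icc a b) :=
    fun t ht => (hC t ht).continuousWithinAt.rexp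
  obtain ⟨B, hB⟩ := isCompact_Icc.exists_bound_of_continuousOn
    (hE.inv₀ fun t _ => (Real.exp_pos (C t)).ne')
  -- `y = e^{-C} x` with `C' = c` solves an ODE whose field is bounded and `K`-Lipschitz
  set g : ℝ → E → E := fun t y => (Real.exp (C t))⁻¹ • h t (Real.exp (C t) • y)
  have hgcont : ∀ y, ContinuousOn (g · y) (Icc a b) := fun y =>
    (hE.inv₀ fun t _ => (Real.exp_pos (C t)).ne').smul
      ((continuousOn_prod_of_continuousOn_lipschitzOnWith' (uncurry h) K
        (fun t ht => (hlip t ht).lipschitzOnWith) fun x _ => hcont x).comp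
        (continuousOn_id.prodMk (hE.smul continuousOn_const)) fun t ht => ⟨ht, mem_univ _⟩)
  have hgbdd : ∀ t ∈ Icc a b, ∀ y, ‖g t y‖ ≤ B * H := fun t ht y => by
    rw [norm_smul]
    exact mul_le_mul (hB t ht) (hbdd t ht _) (norm_nonneg _) ((norm_nonneg _).trans (hB t ht))
  obtain ⟨y, hy₀, hy⟩ := exists_hasDerivWithinAt_of_lipschitzWith_of_norm_le ht₀
    ((Real.exp (C t₀))⁻¹ • x₀)
    (fun t ht => (hlip t ht).inv_smul_comp_smul (Real.exp_pos (C t)).ne') hgcont hgbdd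
  refine ⟨fun t => Real.exp (C t) • y t, ?_, fun t ht => ?_⟩
  · simp only [hy₀, smul_inv_smul₀ (Real.exp_pos _).ne']
  · refine ((hC t ht).exp.smul (hy t ht)).congr_deriv ?_
    show Real.exp (C t) • g t (y t) + (Real.exp (C t) * c t) • y t =
      c t • (Real.exp (C t) • y t) + h t (Real.exp (C t) • y t)
    rw [smul_inv_smul₀ (Real.exp_pos _).ne', smul_smul, mul_comm, add_comm]

theorem exists_hasDerivWithinAt_triangular (hab : a ≤ b) (K : ℕ) {g c : ℕ → ℝ → ℝ}
    (hg : ∀ k, ContinuousOn (g k) (Icc a b)) (hc : ∀ k, ContinuousOn (c k) (Icc a b))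
    (M : ℕ → ℝ) :
    ∃ m : ℕ → ℝ → ℝ, (∀ k, ContinuousOn (m k) (Icc a b)) ∧ (∀ k, K ≤ k → m k = 0) ∧
      ∀ k < K, m k a = M k ∧ ∀ t ∈ Icc a b,
        HasDerivWithinAt (m k) (g k t * m (k + 1) t - c k t * m k t) (Icc a b) t := by
  induction K generalizing g c M with
  | zero =>
    exact ⟨0, fun _ => continuousOn_const, fun _ _ => rfl, fun k hk => absurd hk k.not_lt_zero⟩
  | succ K ih =>
    obtain ⟨m, hmc, hm0, hm⟩ := ih (fun k => hg (k + 1)) (fun k => hc (k + 1)) (fun k => M (k + 1))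
    obtain ⟨H, hH⟩ := isCompact_Icc.exists_bound_of_continuousOn ((hg 0).mul (hmc 0))
    obtain ⟨f, hfa, hf⟩ := exists_hasDerivWithinAt_smul_add (c := fun t => -c 0 t)
      (h := fun t _ => g 0 t * m 0 t) (K := 0) (left_mem_Icc.2 hab) (M 0) (hc 0).neg
      (fun _ _ => LipschitzWith.const _) (fun _ => (hg 0).mul (hmc 0)) (fun t ht _ => hH t ht)
    refine ⟨fun | 0 => f | k + 1 => m k, ?_, ?_, ?_⟩
    · rintro (_ | k)
      exacts [fun t ht => (hf t ht).continuousWithinAt, hmc k]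
    · rintro (_ | k) hk
      exacts [absurd hk (by omega), hm0 k (by omega)]
    · rintro (_ | k) hk
      · exact ⟨hfa, fun t ht => (hf t ht).congr_deriv (by simp only [smul_eq_mul]; ring)⟩
      · exact hm k (by omega)

theorem nonneg_of_hasDerivAt_nonpos_of_neg {f f' : ℝ → ℝ} (hf : ContinuousOn f (Icc a b))
    (hf' : ∀ t ∈ Ioo a b, HasDerivAt f (f' t) t) (hb : 0 ≤ f b)
    (hneg : ∀ t ∈ Ioo a b, f t < 0 → f' t ≤ 0) : ∀ t ∈ Icc a b, 0 ≤ f t := by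
  intro t₀ ht₀
  by_contra! h₀
  set S := Icc t₀ b ∩ f ⁻¹' Ici 0
  have hS : IsClosed S := (hf.mono (Icc_subset_Icc ht₀.1 le_rfl)).preimage_isClosed_of_isClosed
    isClosed_Icc isClosed_Ici
  have hSbdd : BddBelow S := ⟨t₀, fun x hx => hx.1.1⟩
  -- `s` is the first time after `t₀` at which `f` is nonnegative again
  set s := sInf S
  have hsS : s ∈ S := hS.csInf_mem ⟨b, ⟨ht₀.2, le_rfl⟩, hb⟩ hSbdd
  have hlt : ∀ t ∈ Ico t₀ s, f t < 0 := fun t ht => by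
    by_contra! h
    exact (csInf_le hSbdd ⟨⟨ht.1, ht.2.le.trans hsS.1.2⟩, h⟩).not_gt ht.2
  have hsub : Ioo t₀ s ⊆ Ioo a b := Ioo_subset_Ioo ht₀.1 hsS.1.2
  have hanti : AntitoneOn f (Icc t₀ s) := by
    refine antitoneOn_of_deriv_nonpos (convex_Icc _ _) (hf.mono (Icc_subset_Icc ht₀.1 hsS.1.2))
      ?_ fun t ht => ?_ <;> rw [interior_Icc] at *
    · exact fun t ht => (hf' t (hsub ht)).differentiableAt.differentiableWithinAt
    · rw [(hf' t (hsub ht)).deriv]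
      exact hneg t (hsub ht) (hlt t ⟨ht.1.le, ht.2⟩)
  have hfs : f s ≤ f t₀ := hanti ⟨le_rfl, hsS.1.1⟩ ⟨hsS.1.1, le_rfl⟩ hsS.1.1
  have hs₀ : 0 ≤ f s := hsS.2
  linarith

theorem eqOn_zero_of_hasDerivWithinAt_mul {c d : ℝ → ℝ} (hc : ContinuousOn c (Icc a b))
    (hd : ∀ t ∈ Icc a b, HasDerivWithinAt d (c t * d t) (Icc a b) t)
    (ht₀ : t₀ ∈ Icc a b) (hd₀ : d t₀ = 0) : EqOn d 0 (Icc a b) := by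
  obtain ⟨C, hC⟩ := isCompact_Icc.exists_bound_of_continuousOn hc
  have hlip : ∀ t ∈ Icc a b, LipschitzOnWith C.toNNReal (c t * ·) univ := fun t ht =>
    ((lipschitzWith_smul (c t)).weaken (by
      rw [← NNReal.coe_le_coe, coe_nnnorm]
      exact (hC t ht).trans (Real.le_coe_toNNReal C))).lipschitzOnWith
  have hdc : ContinuousOn d (Icc a b) := fun t ht => (hd t ht).continuousWithinAt
  have h0 : ∀ t s, HasDerivWithinAt (0 : ℝ → ℝ) (c t * 0) s t := fun t s => by
    rw [mul_zero]
    exact hasDerivWithinAt_const t s 0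
  intro t ht
  rcases le_total t t₀ with htt | htt
  · exact ODE_solution_unique_of_mem_Icc_left (v := fun t x => c t * x) (s := fun _ => univ)
      (fun t ht' => hlip t ⟨ht'.1.le, ht'.2.trans ht₀.2⟩)
      (hdc.mono (Icc_subset_Icc le_rfl ht₀.2))
      (fun t ht' => (hd t ⟨ht'.1.le, ht'.2.trans ht₀.2⟩).mono_of_mem_nhdsWithin
        (Icc_mem_nhdsLE_of_mem ⟨ht'.1, ht'.2.trans ht₀.2⟩))
      (fun _ _ => mem_univ _) continuousOn_const (fun t _ => h0 t _) (fun _ _ => mem_univ _)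
      hd₀ ⟨ht.1, htt⟩
  · exact ODE_solution_unique_of_mem_Icc_right (v := fun t x => c t * x) (s := fun _ => univ)
      (fun t ht' => hlip t ⟨ht₀.1.trans ht'.1, ht'.2.le⟩)
      (hdc.mono (Icc_subset_Icc ht₀.1 le_rfl))
      (fun t ht' => (hd t ⟨ht₀.1.trans ht'.1, ht'.2.le⟩).mono_of_mem_nhdsWithin
        (Icc_mem_nhdsGE_of_mem ⟨ht₀.1.trans ht'.1, ht'.2⟩))
      (fun _ _ => mem_univ _) continuousOn_const (fun t _ => h0 t _) (fun _ _ => mem_univ _)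
      hd₀ ⟨htt, ht.2⟩

theorem eqOn_of_derivWithin_sub_eq_mul {f g c : ℝ → ℝ} (hf : ContDiffOn ℝ 1 f (Icc a b))
    (hg : ContDiffOn ℝ 1 g (Icc a b)) (hc : ContinuousOn c (Icc a b)) (ht₀ : t₀ ∈ Icc a b)
    (h₀ : f t₀ = g t₀)
    (h : ∀ t ∈ Icc a b, derivWithin f (Icc a b) t - derivWithin g (Icc a b) t = c t * (f t - g t)) :
    EqOn f g (Icc a b) := fun _ hs =>
  sub_eq_zero.1 <| eqOn_zero_of_hasDerivWithinAt_mul hc (fun t ht =>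
    (((hf.differentiableOn one_ne_zero t ht).hasDerivWithinAt).sub
      (hg.differentiableOn one_ne_zero t ht).hasDerivWithinAt).congr_deriv (h t ht))
    ht₀ (sub_eq_zero.2 h₀) hs

theorem contDiffOn_one_of_hasDerivWithinAt {s : Set ℝ} {f f' : ℝ → ℝ} (hs : UniqueDiffOn ℝ s)
    (hf : ∀ t ∈ s, HasDerivWithinAt f (f' t) s t) (hf' : ContinuousOn f' s) :
    ContDiffOn ℝ 1 f s :=
  (contDiffOn_one_iff_derivWithin hs).2 ⟨fun t ht => (hf t ht).differentiableWithinAt,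
    hf'.congr fun t ht => (hf t ht).derivWithin (hs t ht)⟩

end ODE

def truncHamiltonian (Δ : ℝ) : ℝ := 1 / 4 * (1 - projIcc 0 1 zero_le_one Δ) ^ 2

theorem truncHamiltonian_of_mem {Δ : ℝ} (h : Δ ∈ Icc 0 1) :
    truncHamiltonian Δ = 1 / 4 * (1 - Δ) ^ 2 := by
  rw [truncHamiltonian, projIcc_of_mem _ h]

theorem truncHamiltonian_of_nonpos {Δ : ℝ} (h : Δ ≤ 0) : truncHamiltonian Δ = 1 / 4 := by
  simp [truncHamiltonian, projIcc_of_le_left _ h]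

theorem truncHamiltonian_of_one_le {Δ : ℝ} (h : 1 ≤ Δ) : truncHamiltonian Δ = 0 := by
  simp [truncHamiltonian, projIcc_of_right_le _ h]

theorem truncHamiltonian_mem_Icc (Δ : ℝ) : truncHamiltonian Δ ∈ Icc 0 (1 / 4) := by
  have h := (projIcc 0 1 zero_le_one Δ).2
  constructor <;> unfold truncHamiltonian <;> nlinarith [h.1, h.2]

theorem lipschitzWith_truncHamiltonian : LipschitzWith (1 / 2) truncHamiltonian := by
  refine LipschitzWith.of_dist_le_mul fun x y => ?_
  set p : ℝ := (projIcc 0 1 zero_le_one x : ℝ)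
  set q : ℝ := (projIcc 0 1 zero_le_one y : ℝ)
  have hp : p ∈ Icc 0 1 := Subtype.prop _
  have hq : q ∈ Icc 0 1 := Subtype.prop _
  have hpq : |p - q| ≤ |x - y| := abs_projIcc_sub_projIcc zero_le_one
  have h2 : |2 - p - q| ≤ 2 := by
    rw [abs_le]; constructor <;> linarith [hp.1, hp.2, hq.1, hq.2]
  rw [Real.dist_eq, Real.dist_eq, truncHamiltonian, truncHamiltonian,
    show 1 / 4 * (1 - p) ^ 2 - 1 / 4 * (1 - q) ^ 2 = 1 / 4 * ((q - p) * (2 - p - q)) by ring,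
    abs_mul, abs_mul, abs_sub_comm q p]
  push_cast
  calc |(1 / 4 : ℝ)| * (|p - q| * |2 - p - q|) ≤ 1 / 4 * (|x - y| * 2) := by
        rw [abs_of_pos (by norm_num)]; gcongr
    _ = 1 / 2 * |x - y| := by ring

section HJB

variable {r a b : ℝ}

theorem exists_hasDerivWithinAt_sub_truncHamiltonian (hab : a ≤ b) {W : ℝ → ℝ}
    (hW : ContinuousOn W (Icc a b)) (r : ℝ) :
    ∃ V : ℝ → ℝ, V b = 0 ∧ ∀ t ∈ Icc a b,
      HasDerivWithinAt V (r * V t - truncHamiltonian (V t - W t)) (Icc a b) t := by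
  obtain ⟨V, hVb, hV⟩ := exists_hasDerivWithinAt_smul_add (c := fun _ => r)
    (h := fun t x => -truncHamiltonian (x - W t)) (right_mem_Icc.2 hab) 0 continuousOn_const
    (fun t _ => LipschitzWith.of_dist_le_mul fun x y => by
      rw [dist_neg_neg, ← dist_sub_right x y (W t)]
      exact lipschitzWith_truncHamiltonian.dist_le_mul _ _)
    (fun x => (lipschitzWith_truncHamiltonian.continuous.comp_continuousOn
      (continuousOn_const.sub hW)).neg)
    (fun t _ x => by
      rw [norm_neg, Real.norm_of_nonneg (truncHamiltonian_mem_Icc _).1]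
      exact (truncHamiltonian_mem_Icc _).2)
  exact ⟨V, hVb, fun t ht => (hV t ht).congr_deriv (by rw [smul_eq_mul]; ring)⟩

theorem sub_mem_Icc_of_hasDerivWithinAt_truncHamiltonian (hr : 0 ≤ r) {V W q : ℝ → ℝ}
    (hq : ∀ t ∈ Icc a b, q t ∈ Icc 0 (1 / 4))
    (hW : ∀ t ∈ Icc a b, HasDerivWithinAt W (r * W t - q t) (Icc a b) t)
    (hV : ∀ t ∈ Icc a b,
      HasDerivWithinAt V (r * V t - truncHamiltonian (V t - W t)) (Icc a b) t)
    (hb : V b - W b ∈ Icc 0 1) : ∀ t ∈ Icc a b, V t - W t ∈ Icc 0 1 := by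
  have hΔ' : ∀ t ∈ Ioo a b, HasDerivAt (fun t => V t - W t)
      (r * (V t - W t) - truncHamiltonian (V t - W t) + q t) t := fun t ht =>
    (((hV t (Ioo_subset_Icc_self ht)).sub (hW t (Ioo_subset_Icc_self ht))).hasDerivAt
      (Icc_mem_nhds ht.1 ht.2)).congr_deriv (by ring)
  have hΔc : ContinuousOn (fun t => V t - W t) (Icc a b) :=
    fun t ht => ((hV t ht).sub (hW t ht)).continuousWithinAt
  refine fun t ht => ⟨nonneg_of_hasDerivAt_nonpos_of_neg hΔc hΔ' hb.1 ?_ t ht,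
    sub_nonneg.1 (nonneg_of_hasDerivAt_nonpos_of_neg (f := fun t => 1 - (V t - W t))
      (continuousOn_const.sub hΔc) (fun t ht => (hΔ' t ht).const_sub 1) (sub_nonneg.2 hb.2)
      ?_ t ht)⟩
  · intro s hs hneg
    rw [truncHamiltonian_of_nonpos hneg.le]
    nlinarith [(hq s (Ioo_subset_Icc_self hs)).2]
  · intro s hs hneg
    rw [truncHamiltonian_of_one_le (by linarith)]
    nlinarith [(hq s (Ioo_subset_Icc_self hs)).1]

/-- `W t = ∫_t^b e^{-r (s - t)} q s ds` for a running reward `q` with values in `[0, 1/4]`. -/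
def IsDiscountedValue (r a b : ℝ) (W : ℝ → ℝ) : Prop :=
  W b = 0 ∧ ∃ q : ℝ → ℝ, (∀ t ∈ Icc a b, q t ∈ Icc 0 (1 / 4)) ∧
    ∀ t ∈ Icc a b, HasDerivWithinAt W (r * W t - q t) (Icc a b) t

theorem isDiscountedValue_zero : IsDiscountedValue r a b 0 :=
  ⟨rfl, 0, fun _ _ => by norm_num, fun t _ => (hasDerivWithinAt_const t _ 0).congr_deriv (by simp)⟩

theorem IsDiscountedValue.continuousOn {W : ℝ → ℝ} (hW : IsDiscountedValue r a b W) :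
    ContinuousOn W (Icc a b) :=
  fun t ht => (hW.2.choose_spec.2 t ht).continuousWithinAt

theorem IsDiscountedValue.exists_hjb (hr : 0 ≤ r) (hab : a ≤ b) {W : ℝ → ℝ}
    (hW : IsDiscountedValue r a b W) :
    ∃ V : ℝ → ℝ, IsDiscountedValue r a b V ∧ ∀ t ∈ Icc a b,
      HasDerivWithinAt V (r * V t - 1 / 4 * (1 - (V t - W t)) ^ 2) (Icc a b) t := by
  obtain ⟨V, hVb, hV⟩ := exists_hasDerivWithinAt_sub_truncHamiltonian hab hW.continuousOn r
  obtain ⟨hWb, q, hq, hW'⟩ := hW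
  have hΔ := sub_mem_Icc_of_hasDerivWithinAt_truncHamiltonian hr hq hW' hV (by simp [hVb, hWb])
  have hV' : ∀ t ∈ Icc a b, HasDerivWithinAt V (r * V t - 1 / 4 * (1 - (V t - W t)) ^ 2)
      (Icc a b) t := fun t ht => (hV t ht).congr_deriv (by rw [truncHamiltonian_of_mem (hΔ t ht)])
  refine ⟨V, ⟨hVb, fun t => 1 / 4 * (1 - (V t - W t)) ^ 2, fun t ht => ⟨by positivity, ?_⟩, hV'⟩,
    hV'⟩
  nlinarith [(hΔ t ht).1, (hΔ t ht).2]

theorem exists_hjb_family (hr : 0 ≤ r) (hab : a ≤ b) :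
    ∃ V : ℕ → ℝ → ℝ, V 0 = 0 ∧ ∀ k, IsDiscountedValue r a b (V k) ∧ ∀ t ∈ Icc a b,
      HasDerivWithinAt (V (k + 1)) (r * V (k + 1) t - 1 / 4 * (1 - (V (k + 1) t - V k t)) ^ 2)
        (Icc a b) t :=
  exists_seq_of_forall_exists isDiscountedValue_zero fun _ hW => hW.exists_hjb hr hab

end HJB

section Market

variable {K : ℕ} {T r : ℝ} {M : ℕ → ℝ}

theorem marketLam_zero (V m : ℕ → ℝ → ℝ) (k : ℕ) (t : ℝ) :
    marketLam K 0 V m k t = 1 / 2 * (1 - (V k t - V (k - 1) t)) := by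
  simp [marketLam]

theorem exists_hjb_solution (hT : 0 < T) (hr : 0 ≤ r) :
    ∃ V : ℕ → ℝ → ℝ, (∀ t, V 0 t = 0) ∧ (∀ k, ContinuousOn (V k) (Icc 0 T)) ∧
      (∀ k, 1 ≤ k → ContDiffOn ℝ 1 (V k) (Icc 0 T)) ∧
      (∀ k, 1 ≤ k → ∀ t ∈ Icc 0 T, derivWithin (V k) (Icc 0 T) t - r * V k t +
        1 / 4 * (1 - (V k t - V (k - 1) t)) ^ 2 = 0) ∧
      ∀ k, V k T = 0 := by
  obtain ⟨V, hV0, hV⟩ := exists_hjb_family hr hT.le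
  have hVc : ∀ k, ContinuousOn (V k) (Icc 0 T) := fun k => (hV k).1.continuousOn
  refine ⟨V, fun t => by simp [hV0], hVc, fun k hk => ?_, fun k hk t ht => ?_, fun k => (hV k).1.1⟩
  · obtain ⟨k, rfl⟩ := Nat.exists_eq_add_of_le' hk
    exact contDiffOn_one_of_hasDerivWithinAt (uniqueDiffOn_Icc hT) (hV k).2
      ((continuousOn_const.mul (hVc _)).sub (continuousOn_const.mul
        ((continuousOn_const.sub ((hVc _).sub (hVc _))).pow 2)))
  · obtain ⟨k, rfl⟩ := Nat.exists_eq_add_of_le' hk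
    rw [((hV k).2 t ht).derivWithin (uniqueDiffOn_Icc hT t ht), Nat.add_sub_cancel]
    ring

theorem exists_kolmogorov_solution (hK : 1 ≤ K) (hT : 0 < T) {V : ℕ → ℝ → ℝ}
    (hV : ∀ k, ContinuousOn (V k) (Icc 0 T)) (M : ℕ → ℝ) :
    ∃ m : ℕ → ℝ → ℝ, (∀ k, k ≤ K → ContDiffOn ℝ 1 (m k) (Icc 0 T)) ∧
      (∀ t ∈ Icc 0 T, derivWithin (m 0) (Icc 0 T) t = marketLam K 0 V m 1 t * m 1 t) ∧
      (∀ k, 1 ≤ k → k ≤ K - 1 → ∀ t ∈ Icc 0 T, derivWithin (m k) (Icc 0 T) t =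
        marketLam K 0 V m (k + 1) t * m (k + 1) t - marketLam K 0 V m k t * m k t) ∧
      (∀ t ∈ Icc 0 T, derivWithin (m K) (Icc 0 T) t = -marketLam K 0 V m K t * m K t) ∧
      ∀ k, k ≤ K → m k 0 = M k := by
  set G : ℕ → ℝ → ℝ := fun k t => 1 / 2 * (1 - (V k t - V (k - 1) t))
  have hG : ∀ k, ContinuousOn (G k) (Icc 0 T) := fun k =>
    continuousOn_const.mul (continuousOn_const.sub ((hV k).sub (hV (k - 1))))
  -- nothing flows out of level `0`
  set c : ℕ → ℝ → ℝ := fun k => if k = 0 then 0 else G k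
  have hc : ∀ k, ContinuousOn (c k) (Icc 0 T) := fun k => by
    simp only [c]
    split_ifs
    exacts [continuousOn_const, hG k]
  obtain ⟨m, hmc, hmK, hm⟩ :=
    exists_hasDerivWithinAt_triangular hT.le (K + 1) (fun k => hG (k + 1)) hc M
  have hderiv : ∀ k ≤ K, ∀ t ∈ Icc 0 T, derivWithin (m k) (Icc 0 T) t =
      G (k + 1) t * m (k + 1) t - c k t * m k t := fun k hk t ht =>
    ((hm k (by omega)).2 t ht).derivWithin (uniqueDiffOn_Icc hT t ht)
  refine ⟨m, fun k hk => ?_, fun t ht => ?_, fun k hk hkK t ht => ?_, fun t ht => ?_,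
    fun k hk => (hm k (by omega)).1⟩
  · refine contDiffOn_one_of_hasDerivWithinAt (uniqueDiffOn_Icc hT) (hm k (by omega)).2 ?_
    exact ((hG _).mul (hmc _)).sub ((hc k).mul (hmc _))
  · rw [hderiv 0 (by omega) t ht, marketLam_zero]
    simp [G, c]
  · rw [hderiv k (by omega) t ht, marketLam_zero, marketLam_zero]
    simp [G, c, show k ≠ 0 by omega]
  · rw [hderiv K le_rfl t ht, marketLam_zero, hmK (K + 1) le_rfl]
    simp [G, c, show K ≠ 0 by omega]

theorem exists_isHJBKolSolution (hK : 1 ≤ K) (hT : 0 < T) (hr : 0 ≤ r) (M : ℕ → ℝ) :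
    ∃ V m : ℕ → ℝ → ℝ, IsHJBKolSolution K T r 0 M V m := by
  obtain ⟨V, hV0, hVc, hVcd, hVhjb, hVT⟩ := exists_hjb_solution hT hr
  obtain ⟨m, hmcd, hm0, hmmid, hmK, hmM⟩ := exists_kolmogorov_solution hK hT hVc M
  exact ⟨V, m, hV0, fun k hk _ => hVcd k hk, hmcd, fun k hk _ t ht => by
    simpa using hVhjb k hk t ht, hm0, hmmid, hmK, fun k _ _ => hVT k, hmM⟩

theorem IsHJBKolSolution.continuousOn_value {ε : ℝ} {V m : ℕ → ℝ → ℝ}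
    (h : IsHJBKolSolution K T r ε M V m) {k : ℕ} (hk : k ≤ K) : ContinuousOn (V k) (Icc 0 T) := by
  rcases Nat.eq_zero_or_pos k with rfl | hk0
  · exact continuousOn_const.congr fun t _ => h.1 t
  · exact (h.2.1 k hk0 hk).continuousOn

theorem IsHJBKolSolution.eqOn_value {M' : ℕ → ℝ} {V₁ m₁ V₂ m₂ : ℕ → ℝ → ℝ}
    (h₁ : IsHJBKolSolution K T r 0 M V₁ m₁) (h₂ : IsHJBKolSolution K T r 0 M' V₂ m₂) :
    ∀ k ≤ K, EqOn (V₁ k) (V₂ k) (Icc 0 T) := by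
  have hc₁ : ∀ k ≤ K, ContinuousOn (V₁ k) (Icc 0 T) := fun _ hk => h₁.continuousOn_value hk
  have hc₂ : ∀ k ≤ K, ContinuousOn (V₂ k) (Icc 0 T) := fun _ hk => h₂.continuousOn_value hk
  obtain ⟨h₁0, h₁V, -, h₁hjb, -, -, -, h₁T, -⟩ := h₁
  obtain ⟨h₂0, h₂V, -, h₂hjb, -, -, -, h₂T, -⟩ := h₂
  intro k hk
  induction k with
  | zero => intro t _; rw [h₁0, h₂0]
  | succ k ih =>
    have hW := ih (by omega)
    intro t ht
    refine eqOn_of_derivWithin_sub_eq_mul (h₁V _ (by omega) hk) (h₂V _ (by omega) hk)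
      (c := fun t => r + (2 - V₁ (k + 1) t - V₂ (k + 1) t + 2 * V₁ k t) / 4) ?_
      ⟨ht.1.trans ht.2, le_rfl⟩ (by rw [h₁T _ (by omega) hk, h₂T _ (by omega) hk])
      (fun s hs => ?_) ht
    · exact continuousOn_const.add ((((continuousOn_const.sub (hc₁ _ hk)).sub (hc₂ _ hk)).add
        (continuousOn_const.mul (hc₁ _ (by omega)))).div_const 4)
    · have e₁ := h₁hjb (k + 1) (by omega) hk s hs
      have e₂ := h₂hjb (k + 1) (by omega) hk s hs
      simp only [zero_mul, add_zero, Nat.add_sub_cancel, ← hW hs] at e₁ e₂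
      linear_combination e₁ - e₂

theorem IsHJBKolSolution.eqOn_density_of_eqOn_succ (hK : 1 ≤ K) {V₁ m₁ V₂ m₂ : ℕ → ℝ → ℝ}
    (h₁ : IsHJBKolSolution K T r 0 M V₁ m₁) (h₂ : IsHJBKolSolution K T r 0 M V₂ m₂) {k : ℕ}
    (hk : k ≤ K) (hnext : k < K → EqOn (m₁ (k + 1)) (m₂ (k + 1)) (Icc 0 T)) :
    EqOn (m₁ k) (m₂ k) (Icc 0 T) := by
  have hV := h₁.eqOn_value h₂
  have hGc : ContinuousOn (fun t => -marketLam K 0 V₁ m₁ k t) (Icc 0 T) := by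
    simp only [marketLam_zero]
    exact (continuousOn_const.mul (continuousOn_const.sub
      ((h₁.continuousOn_value hk).sub (h₁.continuousOn_value (by omega))))).neg
  obtain ⟨-, -, h₁m, -, h₁0, h₁mid, h₁K, -, h₁M⟩ := h₁
  obtain ⟨-, -, h₂m, -, h₂0, h₂mid, h₂K, -, h₂M⟩ := h₂
  have hG : ∀ j, 1 ≤ j → j ≤ K → ∀ t ∈ Icc 0 T,
      marketLam K 0 V₂ m₂ j t = marketLam K 0 V₁ m₁ j t := fun j hj hjK t ht => by
    rw [marketLam_zero, marketLam_zero, hV j hjK ht, hV (j - 1) (by omega) ht]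
  intro t ht
  have key : ∀ c : ℝ → ℝ, ContinuousOn c (Icc 0 T) → (∀ s ∈ Icc 0 T,
      derivWithin (m₁ k) (Icc 0 T) s - derivWithin (m₂ k) (Icc 0 T) s =
        c s * (m₁ k s - m₂ k s)) → m₁ k t = m₂ k t := fun c hc h =>
    eqOn_of_derivWithin_sub_eq_mul (h₁m k hk) (h₂m k hk) hc ⟨le_rfl, ht.1.trans ht.2⟩
      (by rw [h₁M k hk, h₂M k hk]) h ht
  rcases Nat.eq_zero_or_pos k with rfl | hk0
  · refine key 0 continuousOn_const fun s hs => ?_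
    rw [h₁0 s hs, h₂0 s hs, hG 1 le_rfl hK s hs, hnext (by omega) hs]
    simp
  rcases hk.lt_or_eq with hkK | rfl
  · refine key _ hGc fun s hs => ?_
    rw [h₁mid k hk0 (by omega) s hs, h₂mid k hk0 (by omega) s hs, hG k hk0 hk s hs,
      hG (k + 1) (by omega) hkK s hs, hnext hkK hs]
    ring
  · refine key _ hGc fun s hs => ?_
    rw [h₁K s hs, h₂K s hs, hG k hk0 le_rfl s hs]
    ring

theorem IsHJBKolSolution.eqOn_density (hK : 1 ≤ K) {V₁ m₁ V₂ m₂ : ℕ → ℝ → ℝ}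
    (h₁ : IsHJBKolSolution K T r 0 M V₁ m₁) (h₂ : IsHJBKolSolution K T r 0 M V₂ m₂) :
    ∀ k ≤ K, EqOn (m₁ k) (m₂ k) (Icc 0 T) := fun _ hk =>
  Nat.decreasingInduction (motive := fun k _ => EqOn (m₁ k) (m₂ k) (Icc 0 T))
    (fun _ hk ih => h₁.eqOn_density_of_eqOn_succ hK h₂ hk.le fun _ => ih)
    (h₁.eqOn_density_of_eqOn_succ hK h₂ le_rfl (absurd · (lt_irrefl K))) hk

end Market

theorem existsUnique_solution_of_no_interaction_general
    (K : ℕ) (hK : 1 ≤ K) (T r : ℝ) (hT : 0 < T) (hr : 0 < r)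
    (M : ℕ → ℝ) :
    (∃ V m : ℕ → ℝ → ℝ, IsHJBKolSolution K T r 0 M V m) ∧
    (∀ V₁ m₁ V₂ m₂ : ℕ → ℝ → ℝ,
      IsHJBKolSolution K T r 0 M V₁ m₁ → IsHJBKolSolution K T r 0 M V₂ m₂ →
      (∀ k, 1 ≤ k → k ≤ K → ∀ t ∈ Set.Icc (0 : ℝ) T, V₁ k t = V₂ k t) ∧
      (∀ k, k ≤ K → ∀ t ∈ Set.Icc (0 : ℝ) T, m₁ k t = m₂ k t)) :=
  ⟨exists_isHJBKolSolution hK hT hr.le M, fun _ _ _ _ h₁ h₂ =>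
    ⟨fun k _ hk => h₁.eqOn_value h₂ k hk, fun k hk => h₁.eqOn_density hK h₂ k hk⟩⟩

/-- **Existence and uniqueness for `ε = 0`.** The decoupled (`ε = 0`) HJB–Kolmogorov system
has exactly one solution on `[0, T]`. -/
theorem existsUnique_solution_of_no_interaction
    (K : ℕ) (hK : 1 ≤ K) (T r : ℝ) (hT : 0 < T) (hr : 0 < r)
    (M : ℕ → ℝ) (hM : ∀ k, k ≤ K → 0 ≤ M k)
    (hMsum : ∑ k ∈ Finset.Icc 0 K, M k = 1) :
    (∃ V m : ℕ → ℝ → ℝ, IsHJBKolSolution K T r 0 M V m) ∧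
    (∀ V₁ m₁ V₂ m₂ : ℕ → ℝ → ℝ,
      IsHJBKolSolution K T r 0 M V₁ m₁ → IsHJBKolSolution K T r 0 M V₂ m₂ →
      (∀ k, 1 ≤ k → k ≤ K → ∀ t ∈ Set.Icc (0 : ℝ) T, V₁ k t = V₂ k t) ∧
      (∀ k, k ≤ K → ∀ t ∈ Set.Icc (0 : ℝ) T, m₁ k t = m₂ k t)) :=
  existsUnique_solution_of_no_interaction_general K hK T r hT hr M
end
end

section
/- Let β̃, γ̃ : [0,T] → ℝ be continuous and nonnegative, and let z̃ : [0,T] → ℝ be a differentiable function with z̃(t) > 0 for all t ∈ [0,T], satisfying z̃'(t) − β̃(t)·z̃(t)² + γ̃(t) = 0 on [0,T]. Then for every t ∈ [0,T]: z̃(t) ≤ z̃(T) + ∫₀ᵀ γ̃(s) ds, and z̃(t) ≥ (1/z̃(T) + ∫₀ᵀ β̃(s) ds)⁻¹. In particular z̃ is bounded above and bounded below away from 0 on [0,T] by constants depending only on z̃(T), ∫₀ᵀ γ̃, and ∫₀ᵀ β̃. -/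
/-!
Rewriting the equation as `z̃' = β̃ z̃² − γ̃` gives `z̃' ≥ −γ̃`, and for `w = 1/z̃` it gives
`w' = −z̃'/z̃² = γ̃/z̃² − β̃ ≥ −β̃`. A function whose derivative is bounded below by `−g` with
`g ≥ 0` satisfies `f t ≤ f T + ∫₀ᵀ g`; applied to `z̃` and to `1/z̃` this gives both bounds.
-/

open Set MeasureTheory

theorem le_add_integral_of_neg_le_deriv {f f' g : ℝ → ℝ} {a b t : ℝ} (ht : t ∈ Icc a b)
    (hf : ∀ s ∈ Icc a b, HasDerivWithinAt f (f' s) (Icc a b) s)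
    (hg : IntegrableOn g (Icc a b)) (hg0 : ∀ s ∈ Icc a b, 0 ≤ g s)
    (hle : ∀ s ∈ Ioo a b, -g s ≤ f' s) :
    f t ≤ f b + ∫ s in a..b, g s := by
  have htb : Icc t b ⊆ Icc a b := Icc_subset_Icc_left ht.1
  have hderiv : ∀ s ∈ Ioo t b, HasDerivWithinAt (fun u => -f u) (-f' s) (Ioi s) s := by
    intro s hs
    have hs' : s ∈ Ioo a b := ⟨ht.1.trans_lt hs.1, hs.2⟩
    exact ((hf s (Ioo_subset_Icc_self hs')).hasDerivAt (Icc_mem_nhds hs'.1 hs'.2)).neg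
      |>.hasDerivWithinAt
  have hdecrease : f t - f b ≤ ∫ s in t..b, g s := by
    have := intervalIntegral.sub_le_integral_of_hasDeriv_right_of_le (g := fun u => -f u) ht.2
      (fun s hs => (hf s (htb hs)).continuousWithinAt.neg.mono htb) hderiv (hg.mono_set htb)
      (fun s hs => neg_le.mp (hle s ⟨ht.1.trans_lt hs.1, hs.2⟩))
    linarith
  have hshrink : ∫ s in t..b, g s ≤ ∫ s in a..b, g s :=
    intervalIntegral.integral_mono_interval ht.1 ht.2 le_rfl
      (ae_restrict_of_forall_mem measurableSet_Ioc fun s hs => hg0 s (Ioc_subset_Icc_self hs))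
      ((intervalIntegrable_iff_integrableOn_Icc_of_le (ht.1.trans ht.2)).mpr hg)
  linarith

theorem riccati_solution_bounds_general (T : ℝ)
    (β γ : ℝ → ℝ)
    (hβc : ContinuousOn β (Set.Icc 0 T)) (hγc : ContinuousOn γ (Set.Icc 0 T))
    (hβ0 : ∀ t ∈ Set.Icc (0 : ℝ) T, 0 ≤ β t) (hγ0 : ∀ t ∈ Set.Icc (0 : ℝ) T, 0 ≤ γ t)
    (z z' : ℝ → ℝ)
    (hz : ∀ t ∈ Set.Icc (0 : ℝ) T, HasDerivWithinAt z (z' t) (Set.Icc 0 T) t)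
    (hzpos : ∀ t ∈ Set.Icc (0 : ℝ) T, 0 < z t)
    (hode : ∀ t ∈ Set.Icc (0 : ℝ) T, z' t - β t * z t ^ 2 + γ t = 0) :
    ∀ t ∈ Set.Icc (0 : ℝ) T,
      z t ≤ z T + (∫ s in (0:ℝ)..T, γ s) ∧
      (1 / z T + (∫ s in (0:ℝ)..T, β s))⁻¹ ≤ z t := by
  intro t ht
  have hz_deriv : ∀ s ∈ Icc (0 : ℝ) T, z' s = β s * z s ^ 2 - γ s := fun s hs => by
    linarith [hode s hs]
  have hinv_deriv : ∀ s ∈ Icc (0 : ℝ) T, -z' s / z s ^ 2 = γ s / z s ^ 2 - β s := fun s hs => by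
    field_simp [(hzpos s hs).ne']
    linarith [hz_deriv s hs]
  refine ⟨le_add_integral_of_neg_le_deriv ht hz hγc.integrableOn_Icc hγ0 fun s hs => ?_, ?_⟩
  · have hs := Ioo_subset_Icc_self hs
    rw [hz_deriv s hs]
    nlinarith [hβ0 s hs, sq_nonneg (z s)]
  · have hinv : (z t)⁻¹ ≤ (z T)⁻¹ + ∫ s in (0:ℝ)..T, β s :=
      le_add_integral_of_neg_le_deriv (f := fun s => (z s)⁻¹) ht
        (fun s hs => (hz s hs).inv (hzpos s hs).ne') hβc.integrableOn_Icc hβ0 fun s hs => by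
          have hs := Ioo_subset_Icc_self hs
          rw [hinv_deriv s hs]
          linarith [div_nonneg (hγ0 s hs) (sq_nonneg (z s))]
    rw [one_div]
    exact inv_le_of_inv_le₀ (hzpos t ht) hinv

/-- A positive solution of `z̃' − β̃ z̃² + γ̃ = 0` on `[0, T]`, with `β̃, γ̃` continuous and
nonnegative, satisfies `z̃(t) ≤ z̃(T) + ∫₀ᵀ γ̃` and `z̃(t) ≥ (1/z̃(T) + ∫₀ᵀ β̃)⁻¹` on `[0, T]`;
in particular it is bounded above and bounded below away from `0`. -/
theorem riccati_solution_bounds (T : ℝ) (hT : 0 < T)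
    (β γ : ℝ → ℝ)
    (hβc : ContinuousOn β (Set.Icc 0 T)) (hγc : ContinuousOn γ (Set.Icc 0 T))
    (hβ0 : ∀ t ∈ Set.Icc (0 : ℝ) T, 0 ≤ β t) (hγ0 : ∀ t ∈ Set.Icc (0 : ℝ) T, 0 ≤ γ t)
    (z z' : ℝ → ℝ)
    (hz : ∀ t ∈ Set.Icc (0 : ℝ) T, HasDerivWithinAt z (z' t) (Set.Icc 0 T) t)
    (hzpos : ∀ t ∈ Set.Icc (0 : ℝ) T, 0 < z t)
    (hode : ∀ t ∈ Set.Icc (0 : ℝ) T, z' t - β t * z t ^ 2 + γ t = 0) :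
    ∀ t ∈ Set.Icc (0 : ℝ) T,
      z t ≤ z T + (∫ s in (0:ℝ)..T, γ s) ∧
      (1 / z T + (∫ s in (0:ℝ)..T, β s))⁻¹ ≤ z t :=
  riccati_solution_bounds_general T β γ hβc hγc hβ0 hγ0 z z' hz hzpos hode
end
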